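/- arXiv:2509.10335 — 8 statements merged into one kernel-verified Lean document; each statement's English description precedes it below -/
import Mathlib

section
/- Let d ≥ 2 and let a, b ∈ EuclideanSpace ℝ (Fin d) with ‖a‖ = 1 and ‖b‖ = 1. Then (1 + ⟪a,b⟫)/2 is the greatest element of the set { ⟪a,x⟫ * ⟪b,x⟫ : x ∈ EuclideanSpace ℝ (Fin d), ‖x‖ = 1 }; that is, ⟪a,x⟫⟪b,x⟫ ≤ (1 + ⟪a,b⟫)/2 for every unit vector x, and the value (1 + ⟪a,b⟫)/2 is attained by some unit vector x. -/
/-!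
Polarization gives `4 ⟪a, x⟫ ⟪b, x⟫ = ⟪a + b, x⟫² - ⟪a - b, x⟫² ≤ ‖a + b‖² ‖x‖²` by Cauchy–Schwarz.
When `‖a‖ = ‖b‖` the vectors `a + b` and `a - b` are orthogonal, so equality holds at
`x = (a + b) / ‖a + b‖`; if `a + b = 0`, any unit vector orthogonal to `a` works, and one exists
in dimension at least two. For unit vectors, `‖a + b‖² / 4 = (1 + ⟪a, b⟫) / 2`.
-/

open RealInnerProductSpace Module

section

variable {E : Type*} [NormedAddCommGroup E] [InnerProductSpace ℝ E]

theorem four_mul_inner_mul_inner (a b x : E) :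
    4 * (⟪a, x⟫ * ⟪b, x⟫) = ⟪a + b, x⟫ ^ 2 - ⟪a - b, x⟫ ^ 2 := by
  rw [inner_add_left, inner_sub_left]; ring

theorem four_mul_inner_mul_inner_le (a b x : E) :
    4 * (⟪a, x⟫ * ⟪b, x⟫) ≤ ‖a + b‖ ^ 2 * ‖x‖ ^ 2 := by
  rw [four_mul_inner_mul_inner, ← mul_pow]
  calc ⟪a + b, x⟫ ^ 2 - ⟪a - b, x⟫ ^ 2 ≤ |⟪a + b, x⟫| ^ 2 := by
        rw [sq_abs]; linarith [sq_nonneg ⟪a - b, x⟫]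
    _ ≤ (‖a + b‖ * ‖x‖) ^ 2 := by gcongr; exact abs_real_inner_le_norm _ _

theorem exists_norm_eq_one_inner_eq_zero (hE : 2 ≤ finrank ℝ E) (v : E) :
    ∃ x : E, ‖x‖ = 1 ∧ ⟪v, x⟫ = 0 := by
  have : FiniteDimensional ℝ E := Module.finite_of_finrank_pos (by omega)
  have hsum := Submodule.finrank_add_finrank_orthogonal (ℝ ∙ v)
  have hspan : finrank ℝ (ℝ ∙ v) ≤ 1 := by
    simpa using finrank_span_le_card (R := ℝ) ({v} : Set E)
  have : Nontrivial (ℝ ∙ v)ᗮ := Module.finrank_pos_iff (R := ℝ).mp (by omega)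
  obtain ⟨x, hx⟩ := exists_norm_eq (ℝ ∙ v)ᗮ zero_le_one
  exact ⟨x, hx, Submodule.inner_right_of_mem_orthogonal (Submodule.mem_span_singleton_self v) x.2⟩

theorem exists_norm_eq_one_four_mul_inner_mul_inner_eq (hE : 2 ≤ finrank ℝ E) {a b : E}
    (hab : ‖a‖ = ‖b‖) : ∃ x : E, ‖x‖ = 1 ∧ 4 * (⟪a, x⟫ * ⟪b, x⟫) = ‖a + b‖ ^ 2 := by
  by_cases h : a + b = 0
  · obtain ⟨x, hx, hax⟩ := exists_norm_eq_one_inner_eq_zero hE a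
    refine ⟨x, hx, ?_⟩
    rw [h, eq_neg_of_add_eq_zero_right h, inner_neg_left, hax]; simp
  · have hn : ‖a + b‖ ≠ 0 := norm_ne_zero_iff.mpr h
    refine ⟨‖a + b‖⁻¹ • (a + b), norm_smul_inv_norm h, ?_⟩
    have hsub : ⟪a - b, a + b⟫ = 0 := by
      rw [real_inner_comm, real_inner_add_sub_eq_zero_iff, hab]
    rw [four_mul_inner_mul_inner, inner_smul_right, inner_smul_right, hsub,
      real_inner_self_eq_norm_sq]
    field_simp
    ring

theorem isGreatest_inner_mul_inner_of_norm_eq (hE : 2 ≤ finrank ℝ E) {a b : E}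
    (hab : ‖a‖ = ‖b‖) :
    IsGreatest {y : ℝ | ∃ x : E, ‖x‖ = 1 ∧ y = ⟪a, x⟫ * ⟪b, x⟫} (‖a + b‖ ^ 2 / 4) := by
  constructor
  · obtain ⟨x, hx, hmax⟩ := exists_norm_eq_one_four_mul_inner_mul_inner_eq hE hab
    exact ⟨x, hx, by linarith⟩
  · rintro y ⟨x, hx, rfl⟩
    have hle := four_mul_inner_mul_inner_le a b x
    rw [hx] at hle
    linarith

end

theorem stmt_0 (d : ℕ) (hd : 2 ≤ d) (a b : EuclideanSpace ℝ (Fin d))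
    (ha : ‖a‖ = 1) (hb : ‖b‖ = 1) :
    IsGreatest {y : ℝ | ∃ x : EuclideanSpace ℝ (Fin d), ‖x‖ = 1 ∧ y = ⟪a, x⟫ * ⟪b, x⟫}
      ((1 + ⟪a, b⟫) / 2) := by
  have hval : ‖a + b‖ ^ 2 / 4 = (1 + ⟪a, b⟫) / 2 := by
    rw [norm_add_sq_real, ha, hb]; ring
  rw [← hval]
  exact isGreatest_inner_mul_inner_of_norm_eq (by rwa [finrank_euclideanSpace_fin])
    (ha.trans hb.symm)
end

section
/- Let d ≥ 1 and let a, b, x ∈ EuclideanSpace ℝ (Fin d) with ‖a‖ = 1, ‖b‖ = 1, and ‖x‖ = 1. Then ⟪a,x⟫ * ⟪b,x⟫ ≤ (1 + ⟪a,b⟫)/2. -/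
open RealInnerProductSpace

theorem stmt_1 (d : ℕ) (hd : 1 ≤ d) (a b x : EuclideanSpace ℝ (Fin d))
    (ha : ‖a‖ = 1) (hb : ‖b‖ = 1) (hx : ‖x‖ = 1) :
    ⟪a, x⟫ * ⟪b, x⟫ ≤ (1 + ⟪a, b⟫) / 2 := by
  have h1 : |⟪a + b, x⟫| ≤ ‖a + b‖ * ‖x‖ := abs_real_inner_le_norm _ _
  have h2 : ‖a + b‖ ^ 2 = 2 + 2 * ⟪a, b⟫ := by
    rw [← real_inner_self_eq_norm_sq, real_inner_add_add_self,
      real_inner_self_eq_norm_sq, real_inner_self_eq_norm_sq, ha, hb]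
    ring
  have h3 : ⟪a + b, x⟫ = ⟪a, x⟫ + ⟪b, x⟫ := inner_add_left _ _ _
  have h4 : (⟪a, x⟫ + ⟪b, x⟫) ^ 2 ≤ 2 + 2 * ⟪a, b⟫ := by
    rw [← h3, ← h2]
    rw [hx, mul_one] at h1
    nlinarith [abs_nonneg ⟪a + b, x⟫, norm_nonneg (a + b), sq_abs ⟪a + b, x⟫]
  nlinarith [sq_nonneg (⟪a, x⟫ - ⟪b, x⟫)]
end

section
/- Let Pᵢ, Pⱼ, P₊, P₋ ∈ EuclideanSpace ℝ (Fin 2), set δ₊ := det(Pⱼ−Pᵢ, P₊−Pᵢ) and δ₋ := det(Pⱼ−Pᵢ, P₋−Pᵢ) (2×2 determinants of the column vectors), and assume δ₊ · δ₋ < 0. For each sign σ ∈ {+, −}, let gᵢ^σ, gⱼ^σ ∈ EuclideanSpace ℝ (Fin 2) satisfy ⟪gᵢ^σ, Pᵢ−Pⱼ⟫ = 1, ⟪gᵢ^σ, P_σ−Pⱼ⟫ = 0, ⟪gⱼ^σ, Pⱼ−Pᵢ⟫ = 1, ⟪gⱼ^σ, P_σ−Pᵢ⟫ = 0. Then the 2×2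 matrix M with entries M(q,s) := (|δ₊|/2)·(gⱼ⁺)_s·(gᵢ⁺)_q + (|δ₋|/2)·(gⱼ⁻)_s·(gᵢ⁻)_q is symmetric: M = Mᵀ. -/
open RealInnerProductSpace Matrix

private lemma key_lagrange (c0 c1 d0 d1 g0 g1 h0 h1 : ℝ)
    (h1' : g0 * c0 + g1 * c1 = -1) (h2 : g0 * d0 + g1 * d1 = -1)
    (h3 : h0 * c0 + h1 * c1 = 1) (h4 : h0 * d0 + h1 * d1 = 0) :
    (c0 * d1 - c1 * d0) * (g0 * h1 - g1 * h0) = 1 := by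
  linear_combination (g0 * c0 + g1 * c1) * h4 - (g0 * d0 + g1 * d1) * h3 - h2

theorem stmt_5 (Pi Pj Pp Pm : EuclideanSpace ℝ (Fin 2)) (δp δm : ℝ)
    (hδp : δp = (Pj - Pi) 0 * (Pp - Pi) 1 - (Pj - Pi) 1 * (Pp - Pi) 0)
    (hδm : δm = (Pj - Pi) 0 * (Pm - Pi) 1 - (Pj - Pi) 1 * (Pm - Pi) 0)
    (hδ : δp * δm < 0)
    (gip gjp gim gjm : EuclideanSpace ℝ (Fin 2))
    (hip1 : ⟪gip, Pi - Pj⟫ = 1) (hip0 : ⟪gip, Pp - Pj⟫ = 0)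
    (hjp1 : ⟪gjp, Pj - Pi⟫ = 1) (hjp0 : ⟪gjp, Pp - Pi⟫ = 0)
    (him1 : ⟪gim, Pi - Pj⟫ = 1) (him0 : ⟪gim, Pm - Pj⟫ = 0)
    (hjm1 : ⟪gjm, Pj - Pi⟫ = 1) (hjm0 : ⟪gjm, Pm - Pi⟫ = 0)
    (M : Matrix (Fin 2) (Fin 2) ℝ)
    (hM : ∀ q s : Fin 2, M q s = |δp| / 2 * gjp s * gip q + |δm| / 2 * gjm s * gim q) :
    M = Mᵀ := by
  simp only [PiLp.inner_apply, Fin.sum_univ_two, PiLp.sub_apply, RCLike.inner_apply,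
    conj_trivial] at hip1 hip0 hjp1 hjp0 him1 him0 hjm1 hjm0
  simp only [PiLp.sub_apply] at hδp hδm
  -- key determinant identities
  have keyp : δp * (gip 0 * gjp 1 - gip 1 * gjp 0) = 1 := by
    rw [hδp]
    apply key_lagrange (Pj 0 - Pi 0) (Pj 1 - Pi 1) (Pp 0 - Pi 0) (Pp 1 - Pi 1)
      (gip 0) (gip 1) (gjp 0) (gjp 1)
    · linarith
    · linarith
    · linarith
    · linarith
  have keym : δm * (gim 0 * gjm 1 - gim 1 * gjm 0) = 1 := by
    rw [hδm]
    apply key_lagrange (Pj 0 - Pi 0) (Pj 1 - Pi 1) (Pm 0 - Pi 0) (Pm 1 - Pi 1)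
      (gim 0) (gim 1) (gjm 0) (gjm 1)
    · linarith
    · linarith
    · linarith
    · linarith
  have hsum : |δp| * (gip 0 * gjp 1 - gip 1 * gjp 0)
      + |δm| * (gim 0 * gjm 1 - gim 1 * gjm 0) = 0 := by
    rcases mul_neg_iff.mp hδ with ⟨hp, hm⟩ | ⟨hp, hm⟩
    · rw [abs_of_pos hp, abs_of_neg hm]
      linear_combination keyp - keym
    · rw [abs_of_neg hp, abs_of_pos hm]
      linear_combination keym - keyp
  ext q s
  rw [transpose_apply, hM q s, hM s q]
  fin_cases q <;> fin_cases s <;> simp only [Fin.mk_zero, Fin.mk_one, Fin.isValue]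
  · linear_combination hsum / 2
  · linear_combination -(hsum / 2)
end

section
/- Let m ≥ 3, let Pᵢ, Pⱼ ∈ EuclideanSpace ℝ (Fin 3), and let Q : ZMod m → EuclideanSpace ℝ (Fin 3). For each α ∈ ZMod m assume the vectors Pⱼ−Pᵢ, Q(α)−Pᵢ, Q(α+1)−Pᵢ are linearly independent, set δ_α := det(Pⱼ−Pᵢ, Q(α)−Pᵢ, Q(α+1)−Pᵢ) (3×3 determinant of the column vectors) and T_α := convexHull ℝ {Pᵢ, Pⱼ, Q(α), Q(α+1)}, and assume the interiors of the sets T_α, α ∈ ZMod m, are pairwise disjoint. For each α let gᵢ^α, gⱼ^α ∈ EuclideanSpace ℝ (Fin 3) satisfy ⟪gᵢ^α, Pᵢ−Pⱼ⟫ = 1, ⟪gᵢ^α, Q(α)−Pⱼ⟫ = 0, ⟪gᵢ^α, Q(α+1)−Pⱼ⟫ = 0, and ⟪gⱼ^α, Pⱼ−Pᵢ⟫ = 1, ⟪gⱼ^α, Q(α)−Pᵢ⟫ = 0, ⟪gⱼ^α, Q(α+1)−Pᵢ⟫ = 0. Then the 3×3 matrix M with entries M(q,s) := ∑_{α ∈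 ZMod m} (|δ_α|/6)·(gⱼ^α)_s·(gᵢ^α)_q is symmetric: M = Mᵀ. -/
/-!
On each tetrahedron of the fan the gradients of the hat functions satisfy
`δ_α • gᵢ^α × gⱼ^α = Q(α+1) - Q(α)`: expanding `gᵢ^α` and `gⱼ^α` in the basis dual to the edge
vectors `Pⱼ - Pᵢ, Q(α) - Pᵢ, Q(α+1) - Pᵢ` writes them through cross products of these edges.
The antisymmetric part of `M` is encoded by the vector `∑ |δ_α| / 6 • gᵢ^α × gⱼ^α`, which
telescopes to `0` as soon as all `δ_α` have the same sign. They do: if two consecutive tetrahedra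
had opposite orientations, `Q(α)` and `Q(α+2)` would lie on the same side of the common face, and
a point near the centroid of that face, moved slightly towards `Q(α)`, would lie in both interiors.
-/

open RealInnerProductSpace Matrix Set Filter Topology

local notation "ℝ³" => EuclideanSpace ℝ (Fin 3)

theorem dotProduct_cross_smul_eq {R : Type*} [CommRing R] (e a b x : Fin 3 → R) :
    (e ⬝ᵥ a ⨯₃ b) • x = (x ⬝ᵥ e) • a ⨯₃ b + (x ⬝ᵥ a) • b ⨯₃ e + (x ⬝ᵥ b) • e ⨯₃ a := by
  simp_rw [cross_apply, vec3_dotProduct]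
  ext i
  fin_cases i <;>
  · simp only [Fin.isValue, Fin.reduceFinMk, cons_val, Pi.add_apply, Pi.smul_apply, smul_eq_mul]
    ring

theorem dotProduct_cross_smul_cross_eq_sub {K : Type*} [Field K] {e a b u v : Fin 3 → K}
    (hδ : e ⬝ᵥ a ⨯₃ b ≠ 0) (hue : u ⬝ᵥ e = -1) (hua : u ⬝ᵥ a = -1) (hub : u ⬝ᵥ b = -1)
    (hve : v ⬝ᵥ e = 1) (hva : v ⬝ᵥ a = 0) (hvb : v ⬝ᵥ b = 0) :
    (e ⬝ᵥ a ⨯₃ b) • u ⨯₃ v = b - a := by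
  set δ := e ⬝ᵥ a ⨯₃ b
  have hu : δ • u = -(a ⨯₃ b + b ⨯₃ e + e ⨯₃ a) := by
    rw [dotProduct_cross_smul_eq, hue, hua, hub]; simp only [neg_one_smul]; abel
  have hv : δ • v = a ⨯₃ b := by
    rw [dotProduct_cross_smul_eq, hve, hva, hvb]; simp
  refine smul_right_injective _ hδ ?_
  calc δ • δ • u ⨯₃ v = (δ • u) ⨯₃ (δ • v) := by simp [smul_smul]
    _ = δ • (b - a) := by
      rw [hu, hv, map_neg, map_add, map_add, LinearMap.neg_apply, LinearMap.add_apply,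
        LinearMap.add_apply, cross_self, cross_cross_eq_smul_sub_smul,
        cross_cross_eq_smul_sub_smul, dot_cross_self, dot_self_cross]
      module

theorem real_inner_eq_dotProduct {n : Type*} [Fintype n] (x y : EuclideanSpace ℝ n) :
    ⟪x, y⟫ = x.ofLp ⬝ᵥ y.ofLp := by
  simp [EuclideanSpace.inner_eq_star_dotProduct, dotProduct_comm]

theorem gradient_smul_cross_eq_sub {p₀ p₁ q q' g₀ g₁ : ℝ³}
    (hδ : (p₁ - p₀).ofLp ⬝ᵥ (q - p₀).ofLp ⨯₃ (q' - p₀).ofLp ≠ 0)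
    (h₀ : ⟪g₀, p₀ - p₁⟫ = 1) (h₀q : ⟪g₀, q - p₁⟫ = 0) (h₀q' : ⟪g₀, q' - p₁⟫ = 0)
    (h₁ : ⟪g₁, p₁ - p₀⟫ = 1) (h₁q : ⟪g₁, q - p₀⟫ = 0) (h₁q' : ⟪g₁, q' - p₀⟫ = 0) :
    ((p₁ - p₀).ofLp ⬝ᵥ (q - p₀).ofLp ⨯₃ (q' - p₀).ofLp) • g₀.ofLp ⨯₃ g₁.ofLp =
      q'.ofLp - q.ofLp := by
  simp only [real_inner_eq_dotProduct, WithLp.ofLp_sub, dotProduct_sub] at h₀ h₀q h₀q' h₁ h₁q h₁q'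
  rw [dotProduct_cross_smul_cross_eq_sub hδ] <;>
    simp only [WithLp.ofLp_sub, dotProduct_sub, sub_sub_sub_cancel_right] <;> linarith

theorem transpose_sum_smul_vecMulVec_of_sum_smul_cross_eq_zero {ι R : Type*} [Fintype ι]
    [CommRing R] (c : ι → R) (u v : ι → Fin 3 → R) (h : ∑ i, c i • u i ⨯₃ v i = 0) :
    (∑ i, c i • vecMulVec (u i) (v i))ᵀ = ∑ i, c i • vecMulVec (u i) (v i) := by
  ext q s
  have key : ∀ i, u i s * v i q - u i q * v i s =
      (Pi.single s 1 ⨯₃ Pi.single q 1) ⬝ᵥ (u i ⨯₃ v i) := by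
    intro i
    rw [cross_dot_cross]
    simp [single_dotProduct, mul_comm]
  rw [← sub_eq_zero]
  calc _ = (Pi.single s 1 ⨯₃ Pi.single q 1) ⬝ᵥ ∑ i, c i • u i ⨯₃ v i := by
        simp [transpose_apply, Matrix.sum_apply, dotProduct_sum, dotProduct_smul, ← key, mul_sub,
          vecMulVec_apply]
    _ = 0 := by rw [h, dotProduct_zero]

theorem ZMod.exists_abs_eq_mul_of_mul_add_one_pos {R : Type*} [Field R] [LinearOrder R]
    [IsStrictOrderedRing R] {m : ℕ} [NeZero m] {f : ZMod m → R}
    (h : ∀ α, 0 < f α * f (α + 1)) : ∃ σ : R, ∀ α, |f α| = σ * f α := by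
  have hf₀ : f 0 ≠ 0 := left_ne_zero_of_mul (h 0).ne'
  have hsame : ∀ α, 0 < f 0 * f α := by
    suffices ∀ n : ℕ, 0 < f 0 * f n from fun α => ZMod.natCast_zmod_val α ▸ this α.val
    intro n
    induction n with
    | zero => simpa using mul_self_pos.2 hf₀
    | succ n ih =>
      push_cast
      refine pos_of_mul_pos_left (b := f n ^ 2) ?_ (sq_nonneg _)
      calc 0 < f 0 * f n * (f n * f (n + 1)) := mul_pos ih (h n)
        _ = _ := by ring
  rcases hf₀.lt_or_gt with hneg | hpos
  · exact ⟨-1, fun α => by rw [abs_of_neg (neg_of_mul_pos_right (hsame α) hneg.le)]; ring⟩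
  · exact ⟨1, fun α => by rw [abs_of_pos (pos_of_mul_pos_right (hsame α) hpos.le), one_mul]⟩

theorem ZMod.sum_abs_smul_eq_zero_of_smul_eq_sub {R V : Type*} [Field R] [LinearOrder R]
    [IsStrictOrderedRing R] [AddCommGroup V] [Module R V] {m : ℕ} [NeZero m]
    {f : ZMod m → R} {w q : ZMod m → V} (hf : ∀ α, 0 < f α * f (α + 1))
    (hw : ∀ α, f α • w α = q (α + 1) - q α) : ∑ α, |f α| • w α = 0 := by
  obtain ⟨σ, hσ⟩ := ZMod.exists_abs_eq_mul_of_mul_add_one_pos hf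
  simp_rw [hσ, mul_smul, hw, ← Finset.smul_sum, Finset.sum_sub_distrib]
  rw [Fintype.sum_equiv (Equiv.addRight 1) (fun α => q (α + 1)) q fun _ => rfl, sub_self,
    smul_zero]

theorem eventually_pos_lineMap {x y : ℝ} (hx : 0 ≤ x) (hxy : 0 < x ∨ 0 < y) :
    ∀ᶠ t in 𝓝[>] (0 : ℝ), 0 < AffineMap.lineMap x y t := by
  rcases hxy with hx₀ | hy
  · have : Tendsto (AffineMap.lineMap x y) (𝓝[>] (0 : ℝ)) (𝓝 x) := by
      simpa using (AffineMap.lineMap_continuous.tendsto (0 : ℝ)).mono_left nhdsWithin_le_nhds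
    exact this.eventually (lt_mem_nhds hx₀)
  · filter_upwards [Ioo_mem_nhdsGT one_pos] with t ⟨ht₀, ht₁⟩
    rw [AffineMap.lineMap_apply_ring']
    nlinarith

theorem AffineBasis.interior_convexHull_inter_nonempty {ι E : Type*} [Fintype ι] [Nontrivial ι]
    [NormedAddCommGroup E] [NormedSpace ℝ E] (b₁ b₂ : AffineBasis ι ℝ E) (k : ι)
    (hface : ∀ i ≠ k, b₁ i = b₂ i) (hk : 0 < b₂.coord k (b₁ k)) :
    (interior (convexHull ℝ (range b₁)) ∩ interior (convexHull ℝ (range b₂))).Nonempty := by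
  classical
  set s := Finset.univ.erase k
  have hs : s.Nonempty :=
    let ⟨i, hi⟩ := exists_ne k; ⟨i, Finset.mem_erase.2 ⟨hi, Finset.mem_univ i⟩⟩
  set F := s.centroid ℝ b₁
  have hF : F = s.centroid ℝ b₂ :=
    s.affineCombination_congr (fun _ _ => rfl) fun i hi => hface i (Finset.ne_of_mem_erase hi)
  have key : ∀ b : AffineBasis ι ℝ E, F = s.centroid ℝ b → 0 < b.coord k (b₁ k) →
      ∀ᶠ t in 𝓝[>] (0 : ℝ), ∀ i, 0 < b.coord i (AffineMap.lineMap F (b₁ k) t) := by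
    intro b hb hbk
    refine eventually_all.2 fun i => ?_
    simp_rw [AffineMap.apply_lineMap, hb]
    by_cases hi : i = k
    · subst hi
      rw [Finset.centroid, b.coord_apply_combination_of_notMem (Finset.notMem_erase i _)
        (s.sum_centroidWeights_eq_one_of_nonempty ℝ hs)]
      exact eventually_pos_lineMap le_rfl (Or.inr hbk)
    · have : 0 < b.coord i (s.centroid ℝ b) := by
        rw [b.coord_apply_centroid (Finset.mem_erase.2 ⟨hi, Finset.mem_univ i⟩)]
        exact inv_pos.2 (Nat.cast_pos.2 hs.card_pos)
      exact eventually_pos_lineMap this.le (Or.inl this)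
  obtain ⟨t, ht₁, ht₂⟩ := ((key b₁ rfl (by simp)).and (key b₂ hF hk)).exists
  refine ⟨AffineMap.lineMap F (b₁ k) t, ?_, ?_⟩
  · rw [b₁.interior_convexHull]; exact ht₁
  · rw [b₂.interior_convexHull]; exact ht₂

theorem affineIndependent_iff_linearIndependent_vsub_zero {k V P : Type*} [Ring k]
    [AddCommGroup V] [Module k V] [AddTorsor V P] {n : ℕ} (p : Fin (n + 1) → P) :
    AffineIndependent k p ↔ LinearIndependent k fun i : Fin n => p i.succ -ᵥ p 0 := by
  rw [affineIndependent_iff_linearIndependent_vsub k p 0,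
    ← linearIndependent_equiv (finSuccAboveEquiv 0)]
  rfl

theorem affineIndependent_of_linearIndependent_sub {k V : Type*} [Ring k] [AddCommGroup V]
    [Module k V] {P₀ P₁ A B : V} (h : LinearIndependent k ![P₁ - P₀, A - P₀, B - P₀]) :
    AffineIndependent k ![P₀, P₁, A, B] := by
  have : (fun i : Fin 3 => ![P₀, P₁, A, B] i.succ -ᵥ ![P₀, P₁, A, B] 0) =
      ![P₁ - P₀, A - P₀, B - P₀] := by
    ext i : 1
    fin_cases i <;> rfl
  rw [affineIndependent_iff_linearIndependent_vsub_zero, this]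
  exact h

noncomputable def AffineBasis.ofAffineIndependent {ι k V P : Type*} [Fintype ι] [DivisionRing k]
    [AddCommGroup V] [Module k V] [AddTorsor V P] [FiniteDimensional k V] {p : ι → P}
    (hp : AffineIndependent k p) (hcard : Fintype.card ι = Module.finrank k V + 1) :
    AffineBasis ι k P :=
  ⟨p, hp, hp.affineSpan_eq_top_iff_card_eq_finrank_add_one.2 hcard⟩

theorem AffineBasis.sub_eq_sum_coord_smul {ι k V : Type*} [Fintype ι] [Ring k]
    [AddCommGroup V] [Module k V] (b : AffineBasis ι k V) (x : V) (i₀ : ι) :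
    x - b i₀ = ∑ i, b.coord i x • (b i - b i₀) := by
  simp only [smul_sub, Finset.sum_sub_distrib, ← Finset.sum_smul, b.sum_coord_apply_eq_one,
    b.linear_combination_coord_eq_self, one_smul]

theorem det_of_cols_ne_zero {n : Type*} [Fintype n] [DecidableEq n] {v : n → EuclideanSpace ℝ n}
    (hv : LinearIndependent ℝ v) : (Matrix.of fun p q => v q p).det ≠ 0 :=
  ((isUnit_iff_isUnit_det _).1 (linearIndependent_cols_iff_isUnit.1
    (hv.map' (WithLp.linearEquiv 2 ℝ (n → ℝ)).toLinearMap (LinearEquiv.ker _)))).ne_zero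

theorem det_of_cols_eq_dotProduct_cross (x y z : ℝ³) :
    (Matrix.of fun p q : Fin 3 => (![x, y, z] q) p).det = x.ofLp ⬝ᵥ y.ofLp ⨯₃ z.ofLp := by
  rw [triple_product_eq_det, ← det_transpose]
  congr
  ext p q
  fin_cases q <;> rfl

theorem AffineBasis.dotProduct_cross_sub_eq_coord_mul (b : AffineBasis (Fin 4) ℝ ℝ³) (x : ℝ³) :
    (b 1 - b 0).ofLp ⬝ᵥ (b 2 - b 0).ofLp ⨯₃ (x - b 0).ofLp =
      b.coord 3 x * ((b 1 - b 0).ofLp ⬝ᵥ (b 2 - b 0).ofLp ⨯₃ (b 3 - b 0).ofLp) := by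
  rw [b.sub_eq_sum_coord_smul x 0, Fin.sum_univ_four]
  simp only [sub_self, smul_zero, zero_add, WithLp.ofLp_add, WithLp.ofLp_smul, map_add, map_smul,
    dotProduct_add, dotProduct_smul, dot_cross_self, cross_self, dotProduct_zero, smul_eq_mul,
    mul_zero]

theorem dotProduct_cross_mul_pos_of_disjoint {P₀ P₁ A B C : ℝ³}
    (h₁ : LinearIndependent ℝ ![P₁ - P₀, A - P₀, B - P₀])
    (h₂ : LinearIndependent ℝ ![P₁ - P₀, B - P₀, C - P₀])
    (hdisj : Disjoint (interior (convexHull ℝ {P₀, P₁, A, B}))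
      (interior (convexHull ℝ {P₀, P₁, B, C}))) :
    0 < ((P₁ - P₀).ofLp ⬝ᵥ (A - P₀).ofLp ⨯₃ (B - P₀).ofLp) *
      ((P₁ - P₀).ofLp ⬝ᵥ (B - P₀).ofLp ⨯₃ (C - P₀).ofLp) := by
  have h₁' : LinearIndependent ℝ ![P₁ - P₀, B - P₀, A - P₀] := by
    convert h₁.comp _ (Equiv.swap (1 : Fin 3) 2).injective using 1
    ext i : 1
    fin_cases i <;> rfl
  have hcard : Fintype.card (Fin 4) = Module.finrank ℝ ℝ³ + 1 := by simp
  let b₁ := AffineBasis.ofAffineIndependent (affineIndependent_of_linearIndependent_sub h₁') hcard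
  let b₂ := AffineBasis.ofAffineIndependent (affineIndependent_of_linearIndependent_sub h₂) hcard
  have hδ₁ := det_of_cols_ne_zero h₁
  have hδ₂ := det_of_cols_ne_zero h₂
  rw [det_of_cols_eq_dotProduct_cross] at hδ₁ hδ₂
  set δ₁ := (P₁ - P₀).ofLp ⬝ᵥ (A - P₀).ofLp ⨯₃ (B - P₀).ofLp
  set δ₂ := (P₁ - P₀).ofLp ⬝ᵥ (B - P₀).ofLp ⨯₃ (C - P₀).ofLp
  -- Cramer's rule for the coordinate of `A` opposite the common face `P₀P₁B`.
  have hcoord : -δ₁ = b₂.coord 3 A * δ₂ := by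
    rw [← dotProduct_neg, cross_anticomm]
    exact b₂.dotProduct_cross_sub_eq_coord_mul A
  by_contra hle
  have hpos : 0 < b₂.coord 3 (b₁ 3) := by
    change 0 < b₂.coord 3 A
    have hneg : δ₁ * δ₂ < 0 := (not_lt.1 hle).lt_of_ne (mul_ne_zero hδ₁ hδ₂)
    refine pos_of_mul_pos_left (b := δ₂ ^ 2) ?_ (sq_nonneg _)
    linear_combination δ₂ * hcoord + hneg
  have hface : ∀ i ≠ 3, b₁ i = b₂ i := by
    intro i hi
    fin_cases i <;> first | rfl | exact absurd rfl hi
  obtain ⟨z, hz₁, hz₂⟩ := b₁.interior_convexHull_inter_nonempty b₂ 3 hface hpos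
  have hr₁ : range b₁ = {P₀, P₁, A, B} := by
    rw [Set.pair_comm A B]
    show range ![P₀, P₁, B, A] = _
    simp only [Matrix.range_cons, Matrix.range_empty, Set.union_empty, Set.singleton_union]
  have hr₂ : range b₂ = {P₀, P₁, B, C} := by
    show range ![P₀, P₁, B, C] = _
    simp only [Matrix.range_cons, Matrix.range_empty, Set.union_empty, Set.singleton_union]
  rw [hr₁] at hz₁
  rw [hr₂] at hz₂
  exact hdisj.ne_of_mem hz₁ hz₂ rfl

theorem stmt_6_general (m : ℕ) [NeZero m]
    (Pi Pj : EuclideanSpace ℝ (Fin 3)) (Q : ZMod m → EuclideanSpace ℝ (Fin 3))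
    (hind : ∀ α : ZMod m,
      LinearIndependent ℝ ![Pj - Pi, Q α - Pi, Q (α + 1) - Pi])
    (δ : ZMod m → ℝ)
    (hδ : ∀ α : ZMod m,
      δ α = (Matrix.of fun p q : Fin 3 =>
        (![Pj - Pi, Q α - Pi, Q (α + 1) - Pi] q) p).det)
    (T : ZMod m → Set (EuclideanSpace ℝ (Fin 3)))
    (hT : ∀ α : ZMod m, T α = convexHull ℝ {Pi, Pj, Q α, Q (α + 1)})
    (hdisj : Pairwise fun α β : ZMod m => Disjoint (interior (T α)) (interior (T β)))
    (gi gj : ZMod m → EuclideanSpace ℝ (Fin 3))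
    (hgi1 : ∀ α : ZMod m, ⟪gi α, Pi - Pj⟫ = 1)
    (hgi0 : ∀ α : ZMod m, ⟪gi α, Q α - Pj⟫ = 0)
    (hgi0' : ∀ α : ZMod m, ⟪gi α, Q (α + 1) - Pj⟫ = 0)
    (hgj1 : ∀ α : ZMod m, ⟪gj α, Pj - Pi⟫ = 1)
    (hgj0 : ∀ α : ZMod m, ⟪gj α, Q α - Pi⟫ = 0)
    (hgj0' : ∀ α : ZMod m, ⟪gj α, Q (α + 1) - Pi⟫ = 0)
    (M : Matrix (Fin 3) (Fin 3) ℝ)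
    (hM : ∀ q s : Fin 3, M q s = ∑ α : ZMod m, |δ α| / 6 * (gj α) s * (gi α) q) :
    M = Mᵀ := by
  have hdet : ∀ α, δ α = (Pj - Pi).ofLp ⬝ᵥ (Q α - Pi).ofLp ⨯₃ (Q (α + 1) - Pi).ofLp :=
    fun α => by rw [hδ, det_of_cols_eq_dotProduct_cross]
  have hδ₀ : ∀ α, δ α ≠ 0 := fun α => hδ α ▸ det_of_cols_ne_zero (hind α)
  have hcross : ∀ α, δ α • (gi α).ofLp ⨯₃ (gj α).ofLp = (Q (α + 1)).ofLp - (Q α).ofLp := by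
    intro α
    rw [hdet]
    exact gradient_smul_cross_eq_sub (hdet α ▸ hδ₀ α) (hgi1 α) (hgi0 α) (hgi0' α) (hgj1 α)
      (hgj0 α) (hgj0' α)
  have hstep : ∀ α, 0 < δ α * δ (α + 1) := by
    intro α
    by_cases h : α = α + 1
    · rw [← h]
      exact mul_self_pos.2 (hδ₀ α)
    · rw [hdet, hdet]
      refine dotProduct_cross_mul_pos_of_disjoint (hind α) (hind (α + 1)) ?_
      simpa only [hT] using hdisj h
  have hsum : ∑ α, (|δ α| / 6) • (gi α).ofLp ⨯₃ (gj α).ofLp = 0 := by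
    simp_rw [div_eq_inv_mul, mul_smul, ← Finset.smul_sum,
      ZMod.sum_abs_smul_eq_zero_of_smul_eq_sub (q := fun α => (Q α).ofLp) hstep hcross, smul_zero]
  have hM' : M = ∑ α, (|δ α| / 6) • vecMulVec (gi α).ofLp (gj α).ofLp := by
    ext q s
    simp only [hM, Matrix.sum_apply, Matrix.smul_apply, vecMulVec_apply, smul_eq_mul]
    exact Finset.sum_congr rfl fun α _ => by ring
  rw [hM']
  exact (transpose_sum_smul_vecMulVec_of_sum_smul_cross_eq_zero _ _ _ hsum).symm

theorem stmt_6 (m : ℕ) [NeZero m] (hm : 3 ≤ m)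
    (Pi Pj : EuclideanSpace ℝ (Fin 3)) (Q : ZMod m → EuclideanSpace ℝ (Fin 3))
    (hind : ∀ α : ZMod m,
      LinearIndependent ℝ ![Pj - Pi, Q α - Pi, Q (α + 1) - Pi])
    (δ : ZMod m → ℝ)
    (hδ : ∀ α : ZMod m,
      δ α = (Matrix.of fun p q : Fin 3 =>
        (![Pj - Pi, Q α - Pi, Q (α + 1) - Pi] q) p).det)
    (T : ZMod m → Set (EuclideanSpace ℝ (Fin 3)))
    (hT : ∀ α : ZMod m, T α = convexHull ℝ {Pi, Pj, Q α, Q (α + 1)})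
    (hdisj : Pairwise fun α β : ZMod m => Disjoint (interior (T α)) (interior (T β)))
    (gi gj : ZMod m → EuclideanSpace ℝ (Fin 3))
    (hgi1 : ∀ α : ZMod m, ⟪gi α, Pi - Pj⟫ = 1)
    (hgi0 : ∀ α : ZMod m, ⟪gi α, Q α - Pj⟫ = 0)
    (hgi0' : ∀ α : ZMod m, ⟪gi α, Q (α + 1) - Pj⟫ = 0)
    (hgj1 : ∀ α : ZMod m, ⟪gj α, Pj - Pi⟫ = 1)
    (hgj0 : ∀ α : ZMod m, ⟪gj α, Q α - Pi⟫ = 0)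
    (hgj0' : ∀ α : ZMod m, ⟪gj α, Q (α + 1) - Pi⟫ = 0)
    (M : Matrix (Fin 3) (Fin 3) ℝ)
    (hM : ∀ q s : Fin 3, M q s = ∑ α : ZMod m, |δ α| / 6 * (gj α) s * (gi α) q) :
    M = Mᵀ :=
  stmt_6_general m Pi Pj Q hind δ hδ T hT hdisj gi gj hgi1 hgi0 hgi0' hgj1 hgj0 hgj0' M hM
end

section
/- Let Pᵢ, Pⱼ, P₊, P₋ ∈ EuclideanSpace ℝ (Fin 2), set δ₊ := det(Pⱼ−Pᵢ, P₊−Pᵢ) and δ₋ := det(Pⱼ−Pᵢ, P₋−Pᵢ), and assume δ₊ · δ₋ < 0. For each sign σ ∈ {+, −}, let gᵢ^σ, gⱼ^σ ∈ EuclideanSpace ℝ (Fin 2) satisfy ⟪gᵢ^σ, Pᵢ−Pⱼ⟫ = 1, ⟪gᵢ^σ, P_σ−Pⱼ⟫ = 0, ⟪gⱼ^σ, Pⱼ−Pᵢ⟫ = 1, ⟪gⱼ^σ, P_σ−Pᵢ⟫ = 0. Let c : Fin 2 → Fin 2 → Fin 2 → Fin 2 → ℝ satisfy the major symmetry c p q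 r s = c r s p q, and set C(q,s,k,l) := (1/4)(c k q l s + c q k l s + c k q s l + c q k s l). Define the 2×2 matrices K_{ij} and K_{ji} by K_{ij}(k,l) := ∑_{q,s} C(q,s,k,l) · ( (|δ₊|/2)(gⱼ⁺)_s(gᵢ⁺)_q + (|δ₋|/2)(gⱼ⁻)_s(gᵢ⁻)_q ) and K_{ji}(k,l) := ∑_{q,s} C(q,s,k,l) · ( (|δ₊|/2)(gᵢ⁺)_s(gⱼ⁺)_q + (|δ₋|/2)(gᵢ⁻)_s(gⱼ⁻)_q ). Then K_{ij} = K_{ji} and K_{ij} = K_{ij}ᵀ. -/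
open RealInnerProductSpace Matrix

theorem stmt_8 (Pi Pj Pp Pm : EuclideanSpace ℝ (Fin 2)) (δp δm : ℝ)
    (hδp : δp = (Pj - Pi) 0 * (Pp - Pi) 1 - (Pj - Pi) 1 * (Pp - Pi) 0)
    (hδm : δm = (Pj - Pi) 0 * (Pm - Pi) 1 - (Pj - Pi) 1 * (Pm - Pi) 0)
    (hδ : δp * δm < 0)
    (gip gjp gim gjm : EuclideanSpace ℝ (Fin 2))
    (hip1 : ⟪gip, Pi - Pj⟫ = 1) (hip0 : ⟪gip, Pp - Pj⟫ = 0)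
    (hjp1 : ⟪gjp, Pj - Pi⟫ = 1) (hjp0 : ⟪gjp, Pp - Pi⟫ = 0)
    (him1 : ⟪gim, Pi - Pj⟫ = 1) (him0 : ⟪gim, Pm - Pj⟫ = 0)
    (hjm1 : ⟪gjm, Pj - Pi⟫ = 1) (hjm0 : ⟪gjm, Pm - Pi⟫ = 0)
    (c : Fin 2 → Fin 2 → Fin 2 → Fin 2 → ℝ)
    (hmaj : ∀ p q r s : Fin 2, c p q r s = c r s p q)
    (C : Fin 2 → Fin 2 → Fin 2 → Fin 2 → ℝ)
    (hC : ∀ q s k l : Fin 2,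
      C q s k l = (1 / 4 : ℝ) * (c k q l s + c q k l s + c k q s l + c q k s l))
    (Kij Kji : Matrix (Fin 2) (Fin 2) ℝ)
    (hKij : ∀ k l : Fin 2, Kij k l = ∑ q : Fin 2, ∑ s : Fin 2,
      C q s k l * (|δp| / 2 * gjp s * gip q + |δm| / 2 * gjm s * gim q))
    (hKji : ∀ k l : Fin 2, Kji k l = ∑ q : Fin 2, ∑ s : Fin 2,
      C q s k l * (|δp| / 2 * gip s * gjp q + |δm| / 2 * gim s * gjm q)) :
    Kij = Kji ∧ Kij = Kijᵀ := by
  simp only [PiLp.inner_apply, Fin.sum_univ_two, RCLike.inner_apply, starRingEnd_apply,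
    star_trivial, PiLp.sub_apply] at hip1 hip0 hjp1 hjp0 him1 him0 hjm1 hjm0 hδp hδm
  -- coordinate forms
  have eap : gip 0 * (Pj 0 - Pi 0) + gip 1 * (Pj 1 - Pi 1) = -1 := by linear_combination -hip1
  have ebp : gip 0 * (Pp 0 - Pi 0) + gip 1 * (Pp 1 - Pi 1) = -1 := by
    linear_combination hip0 - hip1
  have ecp : gjp 0 * (Pj 0 - Pi 0) + gjp 1 * (Pj 1 - Pi 1) = 1 := by linear_combination hjp1
  have edp : gjp 0 * (Pp 0 - Pi 0) + gjp 1 * (Pp 1 - Pi 1) = 0 := by linear_combination hjp0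
  have eam : gim 0 * (Pj 0 - Pi 0) + gim 1 * (Pj 1 - Pi 1) = -1 := by linear_combination -him1
  have ebm : gim 0 * (Pm 0 - Pi 0) + gim 1 * (Pm 1 - Pi 1) = -1 := by
    linear_combination him0 - him1
  have ecm : gjm 0 * (Pj 0 - Pi 0) + gjm 1 * (Pj 1 - Pi 1) = 1 := by linear_combination hjm1
  have edm : gjm 0 * (Pm 0 - Pi 0) + gjm 1 * (Pm 1 - Pi 1) = 0 := by linear_combination hjm0
  have Dp : δp * (gip 0 * gjp 1 - gip 1 * gjp 0) = 1 := by
    rw [hδp]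
    linear_combination (gip 0 * (Pj 0 - Pi 0) + gip 1 * (Pj 1 - Pi 1)) * edp
      - (gjp 0 * (Pj 0 - Pi 0) + gjp 1 * (Pj 1 - Pi 1)) * ebp + ecp
  have Dm : δm * (gim 0 * gjm 1 - gim 1 * gjm 0) = 1 := by
    rw [hδm]
    linear_combination (gim 0 * (Pj 0 - Pi 0) + gim 1 * (Pj 1 - Pi 1)) * edm
      - (gjm 0 * (Pj 0 - Pi 0) + gjm 1 * (Pj 1 - Pi 1)) * ebm + ecm
  have hA : |δp| * (gip 0 * gjp 1 - gip 1 * gjp 0)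
      + |δm| * (gim 0 * gjm 1 - gim 1 * gjm 0) = 0 := by
    rcases lt_or_gt_of_ne (fun h : δp = 0 => by simp [h] at hδ) with hp | hp
    · have hm : 0 < δm := by nlinarith
      rw [abs_of_neg hp, abs_of_pos hm]
      linear_combination Dm - Dp
    · have hm : δm < 0 := by nlinarith
      rw [abs_of_pos hp, abs_of_neg hm]
      linear_combination Dp - Dm
  have hC1 : ∀ k l : Fin 2, C 0 1 l k = C 1 0 k l := by
    intro k l
    rw [hC, hC]
    linear_combination (1/4 : ℝ) * (hmaj l 0 k 1 + hmaj 0 l k 1 + hmaj l 0 1 k + hmaj 0 l 1 k)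
  have hC2 : ∀ k l : Fin 2, C 1 0 l k = C 0 1 k l := by
    intro k l
    rw [hC, hC]
    linear_combination (1/4 : ℝ) * (hmaj l 1 k 0 + hmaj 1 l k 0 + hmaj l 1 0 k + hmaj 1 l 0 k)
  have hC0 : ∀ k l : Fin 2, C 0 0 l k = C 0 0 k l := by
    intro k l
    rw [hC, hC]
    linear_combination (1/4 : ℝ) * (hmaj l 0 k 0 + hmaj 0 l k 0 + hmaj l 0 0 k + hmaj 0 l 0 k)
  have hC3 : ∀ k l : Fin 2, C 1 1 l k = C 1 1 k l := by
    intro k l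
    rw [hC, hC]
    linear_combination (1/4 : ℝ) * (hmaj l 1 k 1 + hmaj 1 l k 1 + hmaj l 1 1 k + hmaj 1 l 1 k)
  constructor
  · ext k l
    rw [hKij, hKji]
    simp only [Fin.sum_univ_two]
    linear_combination ((C 0 1 k l - C 1 0 k l) / 2) * hA
  · ext k l
    rw [transpose_apply, hKij, hKij]
    simp only [Fin.sum_univ_two]
    linear_combination ((C 0 1 k l - C 1 0 k l) / 2) * hA
      - (|δp| / 2 * gjp 1 * gip 0 + |δm| / 2 * gjm 1 * gim 0) * hC1 k l
      - (|δp| / 2 * gjp 0 * gip 1 + |δm| / 2 * gjm 0 * gim 1) * hC2 k l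
      - (|δp| / 2 * gjp 0 * gip 0 + |δm| / 2 * gjm 0 * gim 0) * hC0 k l
      - (|δp| / 2 * gjp 1 * gip 1 + |δm| / 2 * gjm 1 * gim 1) * hC3 k l
end

section
/- Let d ≥ 1, let (Ω, 𝔪) be a measure space, and let u, v : Ω → EuclideanSpace ℝ (Fin d) be such that for all k, l ∈ Fin d the function ω ↦ (u ω) k · (v ω) l is integrable with respect to 𝔪. Let λ, μ ∈ ℝ with μ > 0 and λ + μ > 0. Define A : Matrix (Fin d) (Fin d) ℝ by A k l := −∫ (u ω) k · (v ω) l d𝔪, assume A is symmetric (A = Aᵀ), set γ := −∫ ⟪u ω, v ω⟫ d𝔪, and set K := (λ + μ) • A + (μ·γ) • (1 : Matrix (Fin d) (Fin d) ℝ). Then K is positive-definite if and only if for every ξ ∈ EuclideanSpace ℝ (Fin d) with ‖ξ‖ = 1 one has ∫ ⟪u ω, ξ⟫·⟪v ω, ξ⟫ d𝔪 < (−μ/(λ + μ)) · ∫ ⟪u ω, v ω⟫ d𝔪. -/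
open RealInnerProductSpace Matrix MeasureTheory

/-! Positive definiteness of a symmetric matrix only has to be tested on the unit sphere. There
the quadratic form of `A` is `-∫ ⟪u, ξ⟫ ⟪v, ξ⟫`, so `ξᵀ K ξ = -(λ + μ) ∫ ⟪u, ξ⟫ ⟪v, ξ⟫ - μ ∫ ⟪u, v⟫`,
and dividing its positivity by `λ + μ > 0` gives the stated inequality. -/

section
variable {ι : Type*} [Fintype ι]

theorem Matrix.IsHermitian.posDef_iff_forall_norm_eq_one {M : Matrix ι ι ℝ} (hM : M.IsHermitian) :
    M.PosDef ↔ ∀ ξ : EuclideanSpace ℝ ι, ‖ξ‖ = 1 → 0 < ξ.ofLp ⬝ᵥ M *ᵥ ξ.ofLp := by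
  refine ⟨fun hpos ξ hξ => ?_, fun h => PosDef.of_dotProduct_mulVec_pos hM fun {x} hx => ?_⟩
  · have hξ0 : ξ.ofLp ≠ 0 := by
      rintro h0
      simp [show ξ = 0 from by ext k; exact congrFun h0 k] at hξ
    exact hpos.dotProduct_mulVec_pos hξ0
  · set y : EuclideanSpace ℝ ι := WithLp.toLp 2 x
    have hy : y ≠ 0 := by simpa [y] using hx
    have hunit := h (‖y‖⁻¹ • y) (norm_smul_inv_norm hy)
    simp only [WithLp.ofLp_smul, mulVec_smul, dotProduct_smul, smul_dotProduct,
      smul_eq_mul] at hunit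
    exact pos_of_mul_pos_right (pos_of_mul_pos_right hunit (by positivity)) (by positivity)

theorem dotProduct_mulVec_smul_add_smul_one [DecidableEq ι] (A : Matrix ι ι ℝ) (a c : ℝ)
    (ξ : EuclideanSpace ℝ ι) :
    ξ.ofLp ⬝ᵥ (a • A + c • 1) *ᵥ ξ.ofLp = a * (ξ.ofLp ⬝ᵥ A *ᵥ ξ.ofLp) + c * ‖ξ‖ ^ 2 := by
  rw [add_mulVec, dotProduct_add, smul_mulVec, smul_mulVec, one_mulVec, dotProduct_smul,
    dotProduct_smul, smul_eq_mul, smul_eq_mul, ← real_inner_self_eq_norm_sq,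
    EuclideanSpace.inner_eq_star_dotProduct]
  simp

variable {Ω : Type*} [MeasurableSpace Ω] {𝔪 : Measure Ω}

theorem integral_inner_mul_inner_eq_dotProduct_mulVec {u v : Ω → EuclideanSpace ℝ ι}
    (hint : ∀ k l, Integrable (fun ω => u ω k * v ω l) 𝔪) (ξ : EuclideanSpace ℝ ι) :
    ∫ ω, ⟪u ω, ξ⟫ * ⟪v ω, ξ⟫ ∂𝔪
      = ξ.ofLp ⬝ᵥ (Matrix.of fun k l => ∫ ω, u ω k * v ω l ∂𝔪) *ᵥ ξ.ofLp := by
  have hexpand : ∀ ω, ⟪u ω, ξ⟫ * ⟪v ω, ξ⟫ = ∑ k, ∑ l, ξ k * (u ω k * v ω l * ξ l) := by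
    intro ω
    simp only [PiLp.inner_apply, RCLike.inner_apply, conj_trivial, Finset.sum_mul_sum]
    exact Finset.sum_congr rfl fun k _ => Finset.sum_congr rfl fun l _ => by ring
  simp only [hexpand, dotProduct, mulVec, of_apply, Finset.mul_sum]
  rw [integral_finsetSum _ fun k _ => integrable_finsetSum _ fun l _ =>
    ((hint k l).mul_const _).const_mul _]
  refine Finset.sum_congr rfl fun k _ => ?_
  rw [integral_finsetSum _ fun l _ => ((hint k l).mul_const _).const_mul _]
  simp only [integral_const_mul, integral_mul_const]
end

theorem stmt_9_general (d : ℕ) {Ω : Type*} [MeasurableSpace Ω] (𝔪 : Measure Ω)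
    (u v : Ω → EuclideanSpace ℝ (Fin d))
    (hint : ∀ k l : Fin d, Integrable (fun ω => u ω k * v ω l) 𝔪)
    (lam mu : ℝ) (hlm : 0 < lam + mu)
    (A : Matrix (Fin d) (Fin d) ℝ)
    (hA : ∀ k l : Fin d, A k l = -∫ ω, u ω k * v ω l ∂𝔪)
    (hAsym : A = Aᵀ)
    (γ : ℝ) (hγ : γ = -∫ ω, ⟪u ω, v ω⟫ ∂𝔪)
    (K : Matrix (Fin d) (Fin d) ℝ)
    (hK : K = (lam + mu) • A + (mu * γ) • (1 : Matrix (Fin d) (Fin d) ℝ)) :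
    K.PosDef ↔ ∀ ξ : EuclideanSpace ℝ (Fin d), ‖ξ‖ = 1 →
      (∫ ω, ⟪u ω, ξ⟫ * ⟪v ω, ξ⟫ ∂𝔪) < (-mu / (lam + mu)) * ∫ ω, ⟪u ω, v ω⟫ ∂𝔪 := by
  have hA' : A = -Matrix.of fun k l => ∫ ω, u ω k * v ω l ∂𝔪 := by ext k l; exact hA k l
  have hA_herm : A.IsHermitian := hAsym.symm
  have hK_herm : K.IsHermitian := hK ▸
    (hA_herm.smul (.all _)).add (isHermitian_one.smul (.all _))
  rw [hK_herm.posDef_iff_forall_norm_eq_one]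
  refine forall₂_congr fun ξ hξ => ?_
  rw [hK, dotProduct_mulVec_smul_add_smul_one, hξ, hA', neg_mulVec, dotProduct_neg,
    ← integral_inner_mul_inner_eq_dotProduct_mulVec hint, hγ, div_mul_eq_mul_div,
    lt_div_iff₀ hlm]
  constructor <;> intro h <;> linarith

theorem stmt_9 (d : ℕ) (hd : 1 ≤ d) {Ω : Type*} [MeasurableSpace Ω] (𝔪 : Measure Ω)
    (u v : Ω → EuclideanSpace ℝ (Fin d))
    (hint : ∀ k l : Fin d, Integrable (fun ω => u ω k * v ω l) 𝔪)
    (lam mu : ℝ) (hmu : 0 < mu) (hlm : 0 < lam + mu)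
    (A : Matrix (Fin d) (Fin d) ℝ)
    (hA : ∀ k l : Fin d, A k l = -∫ ω, u ω k * v ω l ∂𝔪)
    (hAsym : A = Aᵀ)
    (γ : ℝ) (hγ : γ = -∫ ω, ⟪u ω, v ω⟫ ∂𝔪)
    (K : Matrix (Fin d) (Fin d) ℝ)
    (hK : K = (lam + mu) • A + (mu * γ) • (1 : Matrix (Fin d) (Fin d) ℝ)) :
    K.PosDef ↔ ∀ ξ : EuclideanSpace ℝ (Fin d), ‖ξ‖ = 1 →
      (∫ ω, ⟪u ω, ξ⟫ * ⟪v ω, ξ⟫ ∂𝔪) < (-mu / (lam + mu)) * ∫ ω, ⟪u ω, v ω⟫ ∂𝔪 :=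
  stmt_9_general d 𝔪 u v hint lam mu hlm A hA hAsym γ hγ K hK
end

section
/- Let d ≥ 1, let λ, μ ∈ ℝ with μ > 0 and λ + μ > 0, and set ν := λ/(2(λ + μ)). Let a, b ∈ EuclideanSpace ℝ (Fin d) with ‖a‖ = 1 and ‖b‖ = 1, and assume −⟪a,b⟫ > 1/(3 − 4ν). Then for every ξ ∈ EuclideanSpace ℝ (Fin d) with ‖ξ‖ = 1, one has (λ + μ)·⟪a,ξ⟫·⟪b,ξ⟫ + μ·⟪a,b⟫ < 0. -/
open RealInnerProductSpace

theorem stmt_10 (d : ℕ) (hd : 1 ≤ d) (lam mu : ℝ) (hmu : 0 < mu) (hlm : 0 < lam + mu)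
    (ν : ℝ) (hν : ν = lam / (2 * (lam + mu)))
    (a b : EuclideanSpace ℝ (Fin d)) (ha : ‖a‖ = 1) (hb : ‖b‖ = 1)
    (hangle : -⟪a, b⟫ > 1 / (3 - 4 * ν)) :
    ∀ ξ : EuclideanSpace ℝ (Fin d), ‖ξ‖ = 1 →
      (lam + mu) * (⟪a, ξ⟫ * ⟪b, ξ⟫) + mu * ⟪a, b⟫ < 0 := by
  intro ξ hξ
  set c : ℝ := ⟪a, b⟫ with hc
  set s : ℝ := ⟪a, ξ⟫ with hs
  set t : ℝ := ⟪b, ξ⟫ with ht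
  -- ν rewrite: 3 - 4ν = (lam+3mu)/(lam+mu)
  have hlm3 : 0 < lam + 3 * mu := by linarith
  have hνval : 3 - 4 * ν = (lam + 3 * mu) / (lam + mu) := by
    rw [hν]; field_simp; ring
  have hang : c * (lam + 3 * mu) < -(lam + mu) := by
    rw [hνval] at hangle
    rw [one_div_div] at hangle
    have := (div_lt_iff₀ hlm3).mp (lt_of_lt_of_le hangle (le_refl _))
    linarith [(div_lt_iff₀ hlm3).mp hangle]
  -- s + t = ⟪a+b, ξ⟫
  have hst : s + t = ⟪a + b, ξ⟫ := (inner_add_left a b ξ).symm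
  have hcs : |⟪a + b, ξ⟫| ≤ ‖a + b‖ * ‖ξ‖ := abs_real_inner_le_norm _ _
  have hnorm : ‖a + b‖ ^ 2 = 2 + 2 * c := by
    rw [norm_add_sq_real, ha, hb]; ring
  have hsq : (s + t) ^ 2 ≤ 2 + 2 * c := by
    rw [hst, ← hnorm]
    have h1 : |⟪a + b, ξ⟫| ≤ ‖a + b‖ := by rw [hξ] at hcs; simpa using hcs
    calc ⟪a + b, ξ⟫ ^ 2 = |⟪a + b, ξ⟫| ^ 2 := (sq_abs _).symm
      _ ≤ ‖a + b‖ ^ 2 := by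
          apply pow_le_pow_left₀ (abs_nonneg _) h1
  have hstle : s * t ≤ (1 + c) / 2 := by nlinarith [sq_nonneg (s - t)]
  nlinarith [mul_le_mul_of_nonneg_left hstle (le_of_lt hlm)]
end

section
/- Let λ, μ ∈ ℝ with μ > 0 and λ + μ > 0. In EuclideanSpace ℝ (Fin 2), let gᵢ⁺ := (−1, −1/√3), gⱼ⁺ := (1, −1/√3), gᵢ⁻ := (−1, 1/√3), gⱼ⁻ := (1, 1/√3), and t := √3/4. Define the 2×2 matrices S and K by S k l := t·((gⱼ⁺)_k·(gᵢ⁺)_l + (gⱼ⁻)_k·(gᵢ⁻)_l), γ := t·(⟪gⱼ⁺, gᵢ⁺⟫ + ⟪gⱼ⁻, gᵢ⁻⟫), and K k l := −λ·S l k − μ·S k l − (if k = l then μ·γ else 0). Then K is positive-definite if and only if λ < μ (equivalently, if and only if ν := λ/(2(λ+μ)) < 1/4). -/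
open RealInnerProductSpace Matrix

/-!
The gradients on `T⁻` are the mirror images of those on `T⁺` in the shared edge, so the
off-diagonal terms of `S` cancel: `S = t • diag(-2, 2/3)`, and `γ = trace S`. Hence `K` is
diagonal with entries `2t(3λ + 5μ)/3`, which is always positive, and `2t(μ - λ)/3`.
-/

lemma outerProduct_add_reflect_eq_diagonal (a : ℝ) (k l : Fin 2) :
    ![1, -a] k * ![-1, -a] l + ![1, a] k * ![-1, a] l = diagonal ![-2, 2 * a ^ 2] k l := by
  fin_cases k <;> fin_cases l <;> simp [diagonal] <;> ring

lemma inner_add_inner_eq_trace {n : Type*} [Fintype n] (u v u' v' : EuclideanSpace ℝ n) :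
    ⟪u, v⟫ + ⟪u', v'⟫ = trace (of fun k l => u k * v l + u' k * v' l) := by
  simp only [PiLp.inner_apply, trace, diag, of_apply, ← Finset.sum_add_distrib]
  congr 1 with k
  simp [mul_comm]

lemma eq_diagonal_of_lame_diagonal {n : Type*} [Fintype n] [DecidableEq n]
    (lam mu γ : ℝ) (d : n → ℝ) (K : Matrix n n ℝ)
    (hK : ∀ k l, K k l =
      -lam * diagonal d l k - mu * diagonal d k l - (if k = l then mu * γ else 0)) :
    K = diagonal fun i => -(lam + mu) * d i - mu * γ := by
  ext k l
  rw [hK]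
  rcases eq_or_ne k l with rfl | hkl
  · simp only [diagonal_apply_eq, if_true]
    ring
  · simp [diagonal, hkl, hkl.symm]

lemma lt_iff_div_two_mul_add_lt_quarter {lam mu : ℝ} (h : 0 < lam + mu) :
    lam < mu ↔ lam / (2 * (lam + mu)) < 1 / 4 := by
  rw [div_lt_div_iff₀ (by positivity) (by norm_num)]
  constructor <;> intro <;> linarith

theorem stmt_13 (lam mu : ℝ) (hmu : 0 < mu) (hlm : 0 < lam + mu)
    (gip gjp gim gjm : EuclideanSpace ℝ (Fin 2))
    (hgip : gip = ![-1, -1 / Real.sqrt 3]) (hgjp : gjp = ![1, -1 / Real.sqrt 3])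
    (hgim : gim = ![-1, 1 / Real.sqrt 3]) (hgjm : gjm = ![1, 1 / Real.sqrt 3])
    (t : ℝ) (ht : t = Real.sqrt 3 / 4)
    (S : Matrix (Fin 2) (Fin 2) ℝ)
    (hS : ∀ k l : Fin 2, S k l = t * (gjp k * gip l + gjm k * gim l))
    (γ : ℝ) (hγ : γ = t * (⟪gjp, gip⟫ + ⟪gjm, gim⟫))
    (K : Matrix (Fin 2) (Fin 2) ℝ)
    (hK : ∀ k l : Fin 2,
      K k l = -lam * S l k - mu * S k l - (if k = l then mu * γ else 0)) :
    (K.PosDef ↔ lam < mu) ∧ (lam < mu ↔ lam / (2 * (lam + mu)) < 1 / 4) := by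
  have hsq : (1 / Real.sqrt 3) ^ 2 = 1 / 3 := by
    rw [div_pow, Real.sq_sqrt (by norm_num), one_pow]
  have houter : (of fun k l => gjp k * gip l + gjm k * gim l) = diagonal ![-2, 2 / 3] := by
    ext k l
    simp only [of_apply, hgip, hgjp, hgim, hgjm, neg_div, outerProduct_add_reflect_eq_diagonal, hsq]
    norm_num
  have hS' : S = diagonal ![-2 * t, 2 * t / 3] := by
    ext k l
    rw [hS, ← of_apply (fun k l => gjp k * gip l + gjm k * gim l), houter]
    fin_cases k <;> fin_cases l <;> simp [diagonal] <;> ring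
  have hγ' : γ = -4 * t / 3 := by
    rw [hγ, inner_add_inner_eq_trace, houter]
    simp only [trace_diagonal, Fin.sum_univ_two, cons_val_zero, cons_val_one, cons_val_fin_one]
    ring
  have ht0 : 0 < t := by rw [ht]; positivity
  refine ⟨?_, lt_iff_div_two_mul_add_lt_quarter hlm⟩
  rw [hS'] at hK
  rw [eq_diagonal_of_lame_diagonal lam mu γ _ K hK, posDef_diagonal_iff, Fin.forall_fin_two]
  simp only [hγ', cons_val_zero, cons_val_one]
  have hfirst : 0 < -(lam + mu) * (-2 * t) - mu * (-4 * t / 3) := by nlinarith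
  have hsecond : -(lam + mu) * (2 * t / 3) - mu * (-4 * t / 3) = 2 * t / 3 * (mu - lam) := by ring
  rw [and_iff_right hfirst, hsecond, mul_pos_iff_of_pos_left (by positivity), sub_pos]
end
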